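/- If a rotationally asymmetric configuration of distinct points on a circle has two confused leaders, then the two confused leaders are not antipodal to each other. -/

import Mathlib

open Real

/-- Normalize a real number into `[0, 2π)` (representing an angle on the circle). -/
noncomputable def norm2pi (x : ℝ) : ℝ := (2 * π) * Int.fract (x / (2 * π))

/-- Clockwise angular distance from `a` to `b`, in `[0, 2π)`. -/
noncomputable def cwAngle (a b : ℝ) : ℝ := norm2pi (b - a)

/-- A configuration: a finite set of angles, all lying in `[0, 2π)`. -/
def OnCircle (s : Finset ℝ) : Prop := ∀ x ∈ s, 0 ≤ x ∧ x < 2 * π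

/-- Rotation of a configuration by angle `θ`. -/
noncomputable def rotConf (s : Finset ℝ) (θ : ℝ) : Finset ℝ :=
  s.image (fun x => norm2pi (x + θ))

/-- Rotational asymmetry: no nontrivial rotation preserves the configuration. -/
def RotAsym (s : Finset ℝ) : Prop := ∀ θ ∈ Set.Ioo 0 (2 * π), rotConf s θ ≠ s

/-- The clockwise gap (angle) sequence of the point `r` in configuration `s`:
consecutive clockwise angular gaps starting at `r`. -/
noncomputable def angleSeq (s : Finset ℝ) (r : ℝ) : List ℝ :=
  let l := ((s.erase r).image (fun x => cwAngle r x)).sort (· ≤ ·)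
  List.zipWith (fun u v => u - v) (l ++ [2 * π]) (0 :: l)

/-- Strict lexicographic order on lists of reals. -/
def ListLexLt (l₁ l₂ : List ℝ) : Prop := List.Lex (· < ·) l₁ l₂

/-- `r` is the true leader of `s`: its angle sequence is lexicographically strictly
smaller than that of every other point. -/
def IsTrueLeader (s : Finset ℝ) (r : ℝ) : Prop :=
  r ∈ s ∧ ∀ x ∈ s, x ≠ r → ListLexLt (angleSeq s r) (angleSeq s x)

/-- The antipodal position of a point `r`. -/
noncomputable def antip (r : ℝ) : ℝ := norm2pi (r + π)

/-- The configuration as seen from `r` assuming its antipodal position is empty. -/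
noncomputable def confC0 (s : Finset ℝ) (r : ℝ) : Finset ℝ := s.erase (antip r)

/-- The configuration as seen from `r` assuming its antipodal position is occupied. -/
noncomputable def confC1 (s : Finset ℝ) (r : ℝ) : Finset ℝ := insert (antip r) s

/-- A confused leader: both possibilities `C₀(r)` and `C₁(r)` are rotationally
asymmetric, and `r` is the true leader in exactly one of them. -/
def ConfusedLeader (s : Finset ℝ) (r : ℝ) : Prop :=
  r ∈ s ∧ RotAsym (confC0 s r) ∧ RotAsym (confC1 s r) ∧
    Xor' (IsTrueLeader (confC0 s r) r) (IsTrueLeader (confC1 s r) r)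

/-- A sure leader: `r` is the true leader in every possible (rotationally
asymmetric) configuration among `C₀(r)`, `C₁(r)`. -/
def SureLeader (s : Finset ℝ) (r : ℝ) : Prop :=
  r ∈ s ∧ (RotAsym (confC0 s r) → IsTrueLeader (confC0 s r) r) ∧
    (RotAsym (confC1 s r) → IsTrueLeader (confC1 s r) r)

/-- An expected leader is a sure leader or a confused leader. -/
def ExpectedLeader (s : Finset ℝ) (r : ℝ) : Prop := SureLeader s r ∨ ConfusedLeader s r

/-- `r'` is the first clockwise neighbor of `r` in `s`. -/
def IsCwNeighbor (s : Finset ℝ) (r r' : ℝ) : Prop :=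
  r' ∈ s ∧ r' ≠ r ∧ ∀ x ∈ s, x ≠ r → cwAngle r r' ≤ cwAngle r x


/-!
Comparing angle sequences lexicographically amounts to finding the least clockwise distance seen
from one point but not from the other. Suppose `r₂ = antip r₁`. Then `C₁(rᵢ) = s` and
`C₀(rᵢ) = s \ {antip rᵢ}`; since deleting its occupied antipode never dethrones a true leader,
each `rᵢ` leads `s \ {antip rᵢ}` but not `s`. The true leader `L` of `s` is more than `π`
clockwise from `r₁` or from `r₂`, say from `r`. The key estimate: when `r` leads, its angle
sequence and that of `x` first differ before the clockwise distance from `x` back to `r`. In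
`s \ {antip r}`, for `x = L`, this places the first difference before `π`, where restoring
`antip r` changes nothing, so `r` would beat `L` in `s` as well.
-/

open Set Finset

namespace Real.Angle

theorem coe_injOn_Ico : InjOn ((↑) : ℝ → Angle) (Ico 0 (2 * π)) := by
  intro a ha b hb hab
  obtain ⟨k, hk⟩ := angle_eq_iff_two_pi_dvd_sub.1 hab
  have hk0 : k = 0 := by
    have h1 : (k : ℝ) < 1 :=
      lt_of_mul_lt_mul_left (by linarith [ha.2, hb.1] : 2 * π * k < 2 * π * 1) two_pi_pos.le
    have h2 : (-1 : ℝ) < k :=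
      lt_of_mul_lt_mul_left (by linarith [ha.1, hb.2] : 2 * π * -1 < 2 * π * k) two_pi_pos.le
    have : k < 1 := by exact_mod_cast h1
    have : -1 < k := by exact_mod_cast h2
    omega
  rw [hk0] at hk
  simpa [sub_eq_zero] using hk

end Real.Angle

theorem norm2pi_mem_Ico (x : ℝ) : norm2pi x ∈ Ico 0 (2 * π) :=
  ⟨mul_nonneg two_pi_pos.le (Int.fract_nonneg _),
    mul_lt_of_lt_one_right two_pi_pos (Int.fract_lt_one _)⟩

@[simp]
theorem coe_norm2pi (x : ℝ) : ((norm2pi x : ℝ) : Angle) = x := by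
  refine Angle.angle_eq_iff_two_pi_dvd_sub.2 ⟨-⌊x / (2 * π)⌋, ?_⟩
  rw [norm2pi, ← Int.self_sub_floor]
  field_simp
  push_cast
  ring

theorem norm2pi_eq_iff {x v : ℝ} (hv : v ∈ Ico 0 (2 * π)) :
    norm2pi x = v ↔ (x : Angle) = v :=
  ⟨fun h => by rw [← h, coe_norm2pi],
    fun h => Angle.coe_injOn_Ico (norm2pi_mem_Ico x) hv (by rw [coe_norm2pi, h])⟩

theorem norm2pi_eq_norm2pi_iff {x y : ℝ} : norm2pi x = norm2pi y ↔ (x : Angle) = y := by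
  rw [norm2pi_eq_iff (norm2pi_mem_Ico y), coe_norm2pi]

theorem cwAngle_mem_Ico (a b : ℝ) : cwAngle a b ∈ Ico 0 (2 * π) := norm2pi_mem_Ico _

@[simp]
theorem coe_cwAngle (a b : ℝ) : ((cwAngle a b : ℝ) : Angle) = b - a := by
  rw [cwAngle, coe_norm2pi, Angle.coe_sub]

theorem cwAngle_eq_iff {a b v : ℝ} (hv : v ∈ Ico 0 (2 * π)) :
    cwAngle a b = v ↔ (b : Angle) - a = v := by
  rw [cwAngle, norm2pi_eq_iff hv, Angle.coe_sub]

theorem cwAngle_injOn (a : ℝ) : InjOn (cwAngle a) (Ico 0 (2 * π)) := by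
  intro x hx y hy h
  apply Angle.coe_injOn_Ico hx hy
  simpa using congrArg ((↑) : ℝ → Angle) h

theorem cwAngle_pos {a b : ℝ} (ha : a ∈ Ico 0 (2 * π)) (hb : b ∈ Ico 0 (2 * π))
    (hne : b ≠ a) :    0 < cwAngle a b := by
  refine (cwAngle_mem_Ico a b).1.lt_of_ne fun h => hne (Angle.coe_injOn_Ico hb ha ?_)
  rw [← sub_eq_zero, ← coe_cwAngle, ← h, Angle.coe_zero]

theorem cwAngle_swap {a b : ℝ} (ha : a ∈ Ico 0 (2 * π)) (hb : b ∈ Ico 0 (2 * π))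
    (hne : b ≠ a) :    cwAngle b a = 2 * π - cwAngle a b := by
  have := cwAngle_pos ha hb hne
  have := (cwAngle_mem_Ico a b).2
  rw [cwAngle_eq_iff ⟨by linarith, by linarith⟩, Angle.coe_sub, Angle.coe_two_pi, coe_cwAngle]
  abel

theorem antip_mem_Ico (r : ℝ) : antip r ∈ Ico 0 (2 * π) := norm2pi_mem_Ico _

@[simp]
theorem coe_antip (r : ℝ) : ((antip r : ℝ) : Angle) = r + π := by
  rw [antip, coe_norm2pi, Angle.coe_add]

theorem antip_antip {r : ℝ} (hr : r ∈ Ico 0 (2 * π)) : antip (antip r) = r := by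
  rw [antip, norm2pi_eq_iff hr, Angle.coe_add, coe_antip, add_assoc, Angle.coe_pi_add_coe_pi,
    add_zero]

theorem cwAngle_antip (r : ℝ) : cwAngle r (antip r) = π := by
  rw [cwAngle_eq_iff ⟨pi_pos.le, by linarith [pi_pos]⟩, coe_antip, add_sub_cancel_left]

theorem eq_antip_of_cwAngle_eq_pi {r x : ℝ} (hx : x ∈ Ico 0 (2 * π)) (h : cwAngle r x = π) :
    x = antip r := by
  refine Angle.coe_injOn_Ico hx (antip_mem_Ico r) ?_
  rw [coe_antip, ← h, coe_cwAngle]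
  abel

theorem cwAngle_antip_of_le_pi {r x : ℝ} (h : cwAngle r x ≤ π) :
    cwAngle x (antip r) = π - cwAngle r x := by
  have := (cwAngle_mem_Ico r x).1
  rw [cwAngle_eq_iff ⟨by linarith, by linarith [pi_pos]⟩, coe_antip, Angle.coe_sub, coe_cwAngle]
  abel

theorem cwAngle_antip_of_pi_lt {r x : ℝ} (h : π < cwAngle r x) :
    cwAngle x (antip r) = 3 * π - cwAngle r x := by
  have := (cwAngle_mem_Ico r x).2
  rw [cwAngle_eq_iff ⟨by linarith, by linarith⟩, coe_antip, show 3 * π - cwAngle r x =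
    2 * π + (π - cwAngle r x) by ring, Angle.coe_add, Angle.coe_two_pi, Angle.coe_sub,
    coe_cwAngle]
  abel

theorem cwAngle_antip_left_of_lt_pi {r x : ℝ} (h : cwAngle r x < π) :
    cwAngle (antip r) x = cwAngle r x + π := by
  have := (cwAngle_mem_Ico r x).1
  rw [cwAngle_eq_iff ⟨by linarith [pi_pos], by linarith⟩, coe_antip, Angle.coe_add, coe_cwAngle,
    ← sub_sub, sub_eq_add_neg _ (π : Angle), Angle.neg_coe_pi]

theorem OnCircle.erase {T : Finset ℝ} (hT : OnCircle T) (a : ℝ) : OnCircle (T.erase a) :=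
  fun x hx => hT x (mem_of_mem_erase hx)

noncomputable def cwDists (T : Finset ℝ) (r : ℝ) : Finset ℝ := (T.erase r).image (cwAngle r)

theorem angleSeq_eq (T : Finset ℝ) (r : ℝ) :
    angleSeq T r = List.zipWith (· - ·) ((cwDists T r).sort (· ≤ ·) ++ [2 * π])
      (0 :: (cwDists T r).sort (· ≤ ·)) := rfl

section cwDists

variable {T : Finset ℝ} {r x u : ℝ}

theorem cwAngle_mem_cwDists (hx : x ∈ T) (hxr : x ≠ r) : cwAngle r x ∈ cwDists T r :=
  mem_image_of_mem _ (mem_erase.2 ⟨hxr, hx⟩)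

theorem mem_cwDists_iff (hT : OnCircle T) (hr : r ∈ Ico 0 (2 * π)) :
    u ∈ cwDists T r ↔ u ∈ Ioo 0 (2 * π) ∧ norm2pi (r + u) ∈ T := by
  constructor
  · intro hu
    obtain ⟨y, hy, rfl⟩ := mem_image.1 hu
    obtain ⟨hyr, hyT⟩ := mem_erase.1 hy
    refine ⟨⟨cwAngle_pos hr (hT y hyT) hyr, (cwAngle_mem_Ico r y).2⟩, ?_⟩
    rwa [(norm2pi_eq_iff (hT y hyT)).2 (by rw [Angle.coe_add, coe_cwAngle, add_sub_cancel])]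
  · rintro ⟨hu, hmem⟩
    refine mem_image.2 ⟨norm2pi (r + u), mem_erase.2 ⟨fun h => hu.1.ne' ?_, hmem⟩, ?_⟩
    · have h' : ((r + u : ℝ) : Angle) = r := (norm2pi_eq_iff hr).1 h
      rw [Angle.coe_add, add_eq_left] at h'
      exact Angle.coe_injOn_Ico ⟨hu.1.le, hu.2⟩ ⟨le_rfl, two_pi_pos⟩
        (by rw [h', Angle.coe_zero])
    · rw [cwAngle_eq_iff ⟨hu.1.le, hu.2⟩, coe_norm2pi, Angle.coe_add, add_sub_cancel_left]

theorem cwDists_subset_Ioo (hT : OnCircle T) (hr : r ∈ Ico 0 (2 * π)) :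
    (cwDists T r : Set ℝ) ⊆ Ioo 0 (2 * π) :=
  fun _ hu => ((mem_cwDists_iff hT hr).1 hu).1

theorem card_cwDists (hT : OnCircle T) (hr : r ∈ T) : (cwDists T r).card = T.card - 1 := by
  rw [cwDists, card_image_of_injOn, card_erase_of_mem hr]
  exact (cwAngle_injOn r).mono fun y hy => hT y (mem_of_mem_erase hy)

theorem cwDists_erase (hT : OnCircle T) (hr : r ∈ Ico 0 (2 * π)) {a : ℝ}
    (ha : a ∈ Ico 0 (2 * π)) : cwDists (T.erase a) r = (cwDists T r).erase (cwAngle r a) := by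
  ext u
  rw [mem_erase, mem_cwDists_iff (hT.erase a) hr, mem_cwDists_iff hT hr, mem_erase]
  refine ⟨fun ⟨hu, hne, hmem⟩ => ⟨?_, hu, hmem⟩,
    fun ⟨hne, hu, hmem⟩ => ⟨hu, ?_, hmem⟩⟩
  · rintro rfl
    exact hne ((norm2pi_eq_iff ha).2 (by rw [Angle.coe_add, coe_cwAngle, add_sub_cancel]))
  · intro h
    refine hne ((cwAngle_eq_iff ⟨hu.1.le, hu.2⟩).2 ?_).symm
    rw [← (norm2pi_eq_iff ha).1 h, Angle.coe_add, add_sub_cancel_left]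

theorem mem_cwDists_iff_add_mem (hT : OnCircle T) {a b : ℝ} (ha : a ∈ Ico 0 (2 * π))
    (hb : b ∈ Ico 0 (2 * π)) (hu : 0 < u) (hub : u + cwAngle a b < 2 * π) :
    u ∈ cwDists T b ↔ u + cwAngle a b ∈ cwDists T a := by
  have := (cwAngle_mem_Ico a b).1
  rw [mem_cwDists_iff hT hb, mem_cwDists_iff hT ha, norm2pi_eq_norm2pi_iff.2 (by
    rw [Angle.coe_add, Angle.coe_add, Angle.coe_add, coe_cwAngle]; abel :
      ((b + u : ℝ) : Angle) = ↑(a + (u + cwAngle a b)))]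
  exact and_congr_left fun _ =>
    ⟨fun h => ⟨by linarith, hub⟩, fun h => ⟨hu, by linarith [h.2]⟩⟩

end cwDists

section FirstDiff

variable {α : Type*} [LinearOrder α] {A B : Finset α} {v : α}

def IsFirstDiff (A B : Finset α) (v : α) : Prop :=
  v ∈ A ∧ v ∉ B ∧ ∀ u < v, (u ∈ A ↔ u ∈ B)

def FirstDiffLT (A B : Finset α) : Prop := ∃ v, IsFirstDiff A B v

theorem FirstDiffLT.not_firstDiffLT (h : FirstDiffLT A B) : ¬FirstDiffLT B A := by
  rintro ⟨w, hwB, hwA, hw⟩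
  obtain ⟨v, hvA, hvB, hv⟩ := h
  rcases lt_trichotomy v w with hvw | rfl | hwv
  · exact hvB ((hw v hvw).2 hvA)
  · exact hwA hvA
  · exact hwA ((hv w hwv).2 hwB)

theorem isFirstDiff_erase_erase_iff {p q : α} (hp : v < p) (hq : v < q) :
    IsFirstDiff (A.erase p) (B.erase q) v ↔ IsFirstDiff A B v := by
  have hA : ∀ u < v, u ∈ A.erase p ↔ u ∈ A := fun u hu => by simp [(hu.trans hp).ne]
  have hB : ∀ u < v, u ∈ B.erase q ↔ u ∈ B := fun u hu => by simp [(hu.trans hq).ne]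
  constructor
  · rintro ⟨hvA, hvB, hv⟩
    exact ⟨mem_of_mem_erase hvA, fun h => hvB (mem_erase.2 ⟨hq.ne, h⟩),
      fun u hu => by rw [← hA u hu, ← hB u hu]; exact hv u hu⟩
  · rintro ⟨hvA, hvB, hv⟩
    exact ⟨mem_erase.2 ⟨hp.ne, hvA⟩, fun h => hvB (mem_of_mem_erase h),
      fun u hu => by rw [hA u hu, hB u hu]; exact hv u hu⟩

theorem IsFirstDiff.erase_erase (h : IsFirstDiff A B v) {c p : α} (hc : c ∈ B)
    (hp : min v c < p) : IsFirstDiff (A.erase p) (B.erase c) (min v c) := by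
  have hvc : v ≠ c := fun hvc => h.2.1 (hvc ▸ hc)
  rcases hvc.lt_or_gt with hvc | hcv
  · rw [min_eq_left hvc.le] at hp ⊢
    exact (isFirstDiff_erase_erase_iff hp hvc).2 h
  · rw [min_eq_right hcv.le] at hp ⊢
    refine ⟨mem_erase.2 ⟨hp.ne, (h.2.2 c hcv).2 hc⟩, fun hm => (mem_erase.1 hm).1 rfl,
      fun u hu => ?_⟩
    rw [mem_erase, mem_erase, h.2.2 u (hu.trans hcv)]
    simp [(hu.trans hp).ne, hu.ne]

end FirstDiff

theorem List.Lex.exists_firstDiff {α : Type*} [LinearOrder α] {l l' : List α}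
    (h : List.Lex (· < ·) l l') (hl : l.Pairwise (· < ·)) (hl' : l'.Pairwise (· < ·))
    (hlen : l.length = l'.length) :
    ∃ v ∈ l, v ∉ l' ∧ ∀ u < v, (u ∈ l ↔ u ∈ l') := by
  induction h with
  | nil => simp at hlen
  | @cons a l₁ l₂ _ ih =>
    rw [List.pairwise_cons] at hl hl'
    obtain ⟨v, hv, hv', hlt⟩ := ih hl.2 hl'.2 (by simpa using hlen)
    refine ⟨v, List.mem_cons_of_mem a hv, ?_, fun u hu => ?_⟩
    · rw [List.mem_cons, not_or]
      exact ⟨(hl.1 v hv).ne', hv'⟩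
    · rw [List.mem_cons, List.mem_cons, hlt u hu]
  | @rel a l₁ b l₂ hab =>
    rw [List.pairwise_cons] at hl hl'
    refine ⟨a, List.mem_cons_self, ?_, fun u hu => iff_of_false ?_ ?_⟩
    all_goals rw [List.mem_cons, not_or]
    · exact ⟨hab.ne, fun ha => lt_asymm hab (hl'.1 a ha)⟩
    · exact ⟨hu.ne, fun hu' => lt_asymm hu (hl.1 u hu')⟩
    · exact ⟨(hu.trans hab).ne, fun hu' => lt_asymm (hu.trans hab) (hl'.1 u hu')⟩

theorem lex_sort_iff_firstDiffLT {α : Type*} [LinearOrder α] {A B : Finset α}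
    (hcard : A.card = B.card) :
    List.Lex (· < ·) (A.sort (· ≤ ·)) (B.sort (· ≤ ·)) ↔ FirstDiffLT A B := by
  have key : ∀ {A B : Finset α}, A.card = B.card →
      List.Lex (· < ·) (A.sort (· ≤ ·)) (B.sort (· ≤ ·)) → FirstDiffLT A B :=
      fun hcard h => by
    obtain ⟨v, hv, hv', hlt⟩ := h.exists_firstDiff (sortedLT_sort _).pairwise
      (sortedLT_sort _).pairwise (by simp [hcard])
    simp only [mem_sort] at hv hv' hlt
    exact ⟨v, hv, hv', hlt⟩
  refine ⟨key hcard, fun h => ?_⟩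
  rcases lt_trichotomy (A.sort (· ≤ ·)) (B.sort (· ≤ ·)) with hlt | heq | hgt
  · exact hlt
  · obtain ⟨v, hvA, hvB, -⟩ := h
    rw [← sort_toFinset A (· ≤ ·), heq, sort_toFinset] at hvA
    exact absurd hvA hvB
  · exact absurd (key hcard.symm hgt) h.not_firstDiffLT

theorem lex_zipWith_sub_iff {α : Type*} [AddCommGroup α] [LinearOrder α] [IsOrderedAddMonoid α]
    (c : α) : ∀ {l l' : List α} (a : α), l.length = l'.length →
      (List.Lex (· < ·) (List.zipWith (· - ·) (l ++ [c]) (a :: l))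
        (List.zipWith (· - ·) (l' ++ [c]) (a :: l')) ↔ List.Lex (· < ·) l l')
  | [], [], a, _ => by simp
  | b :: l, b' :: l', a, hlen => by
    simp only [List.cons_append, List.zipWith_cons_cons, List.cons_lex_cons_iff,
      sub_lt_sub_iff_right, sub_left_inj]
    refine or_congr_right (and_congr_right fun hb => ?_)
    subst hb
    exact lex_zipWith_sub_iff c b (by simpa using hlen)

theorem zipWith_sub_injective {α : Type*} [AddCommGroup α] [LinearOrder α]
    [IsOrderedAddMonoid α] (c a : α) {l l' : List α} (hlen : l.length = l'.length)
    (h : List.zipWith (· - ·) (l ++ [c]) (a :: l) =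
      List.zipWith (· - ·) (l' ++ [c]) (a :: l')) :
    l = l' := by
  by_contra hne
  rcases lt_or_gt_of_ne hne with hlt | hlt
  · have hlex := (lex_zipWith_sub_iff c a hlen).2 hlt
    rw [h] at hlex
    exact lt_irrefl (α := List α) _ hlex
  · have hlex := (lex_zipWith_sub_iff c a hlen.symm).2 hlt
    rw [h] at hlex
    exact lt_irrefl (α := List α) _ hlex

section Leader

variable {T : Finset ℝ} {r x : ℝ}

theorem listLexLt_angleSeq_iff (hT : OnCircle T) (hr : r ∈ T) (hx : x ∈ T) :
    ListLexLt (angleSeq T r) (angleSeq T x) ↔ FirstDiffLT (cwDists T r) (cwDists T x) := by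
  have hcard : (cwDists T r).card = (cwDists T x).card := by
    rw [card_cwDists hT hr, card_cwDists hT hx]
  rw [ListLexLt, angleSeq_eq, angleSeq_eq, lex_zipWith_sub_iff _ _ (by simp [hcard]),
    lex_sort_iff_firstDiffLT hcard]

theorem cwDists_injOn (hT : OnCircle T) (hasym : RotAsym T) : InjOn (cwDists T) T := by
  intro x hx y hy hxy
  by_contra hne
  set θ := cwAngle x y
  refine hasym θ ⟨cwAngle_pos (hT x hx) (hT y hy) (Ne.symm hne), (cwAngle_mem_Ico x y).2⟩ ?_
  have hinj : InjOn (fun z => norm2pi (z + θ)) T := fun a ha b hb h => by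
    refine Angle.coe_injOn_Ico (hT a ha) (hT b hb) ?_
    simpa using norm2pi_eq_norm2pi_iff.1 h
  refine eq_of_subset_of_card_le (fun w hw => ?_) (card_image_of_injOn hinj).ge
  obtain ⟨z, hz, rfl⟩ := mem_image.1 hw
  rcases eq_or_ne z x with rfl | hzx
  · rwa [(norm2pi_eq_iff (hT y hy)).2 (by rw [Angle.coe_add, coe_cwAngle, add_sub_cancel])]
  · have hu := cwAngle_mem_cwDists hz hzx
    rw [hxy, mem_cwDists_iff hT (hT y hy)] at hu
    rw [norm2pi_eq_norm2pi_iff.2 (by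
      rw [Angle.coe_add, Angle.coe_add, coe_cwAngle, coe_cwAngle]; abel :
        ((z + θ : ℝ) : Angle) = ↑(y + cwAngle x z))]
    exact hu.2

theorem angleSeq_injOn (hT : OnCircle T) (hasym : RotAsym T) : InjOn (angleSeq T) T := by
  intro x hx y hy h
  refine cwDists_injOn hT hasym hx hy ?_
  rw [← sort_toFinset (cwDists T x) (· ≤ ·), ← sort_toFinset (cwDists T y) (· ≤ ·)]
  rw [angleSeq_eq, angleSeq_eq] at h
  exact congrArg _ (zipWith_sub_injective _ _ (by simp [card_cwDists hT hx, card_cwDists hT hy]) h)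

theorem exists_isTrueLeader (hT : OnCircle T) (hasym : RotAsym T) (hne : T.Nonempty) :
    ∃ L, IsTrueLeader T L := by
  obtain ⟨L, hL, hmin⟩ := T.exists_min_image (angleSeq T) hne
  exact ⟨L, hL, fun x hx hxL =>
    (hmin x hx).lt_of_ne fun h => hxL (angleSeq_injOn hT hasym hx hL h.symm)⟩

end Leader

theorem antip_ne_self (r : ℝ) : antip r ≠ r := fun h =>
  Angle.pi_ne_zero (by simpa using congrArg ((↑) : ℝ → Angle) h)

theorem pi_lt_cwAngle_or_pi_lt_cwAngle_antip {r x : ℝ} (hr : r ∈ Ico 0 (2 * π))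
    (hx : x ∈ Ico 0 (2 * π)) (hxr : x ≠ r) (hxa : x ≠ antip r) :
    π < cwAngle r x ∨ π < cwAngle (antip r) x := by
  have hπ : cwAngle r x ≠ π := fun h => hxa (eq_antip_of_cwAngle_eq_pi hx h)
  rcases hπ.lt_or_gt with h | h
  · right
    rw [cwAngle_antip_left_of_lt_pi h]
    linarith [cwAngle_pos hr hx hxr]
  · exact Or.inl h

section Leader

variable {T : Finset ℝ} {r x δ : ℝ}

theorem IsTrueLeader.lt_cwAngle_of_isFirstDiff (hT : OnCircle T) (hlead : IsTrueLeader T r)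
    (hx : x ∈ T) (hδ : IsFirstDiff (cwDists T r) (cwDists T x) δ) : δ < cwAngle x r := by
  have hr := hlead.1
  have hxr : x ≠ r := by rintro rfl; exact hδ.2.1 hδ.1
  set e := cwAngle x r
  have he : e ∈ cwDists T x := cwAngle_mem_cwDists hr hxr.symm
  by_contra! hδe
  have heδ : e < δ := hδe.lt_of_ne fun h => hδ.2.1 (h ▸ he)
  obtain ⟨z, hz, hze⟩ := mem_image.1 ((hδ.2.2 e heδ).2 he)
  obtain ⟨hzr, hzT⟩ := mem_erase.1 hz
  have hδ2π := (cwDists_subset_Ioo hT (hT r hr) hδ.1).2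
  have shift_z := fun {u} (hu : 0 < u) (hue : u + e < 2 * π) => hze ▸
    mem_cwDists_iff_add_mem hT (hT r hr) (hT z hzT) hu (hze ▸ hue)
  have shift_r := fun {u} (hu : 0 < u) (hue : u + e < 2 * π) =>
    mem_cwDists_iff_add_mem hT (hT x hx) (hT r hr) hu hue
  -- `z` sees `r + e` where `r` sees `x + e`: shifted by `e`, `z` against `r` repeats `r`
  -- against `x`, so `z` beats `r`.
  have hzlt : FirstDiffLT (cwDists T z) (cwDists T r) := by
    refine ⟨δ - e, ?_, ?_, fun u hu => ?_⟩
    · rw [shift_z (by linarith) (by linarith), sub_add_cancel]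
      exact hδ.1
    · rw [shift_r (by linarith) (by linarith), sub_add_cancel]
      exact hδ.2.1
    · rcases le_or_gt u 0 with hu0 | hu0
      · exact iff_of_false (fun h => (cwDists_subset_Ioo hT (hT z hzT) h).1.not_ge hu0)
          (fun h => (cwDists_subset_Ioo hT (hT r hr) h).1.not_ge hu0)
      · rw [shift_z hu0 (by linarith), shift_r hu0 (by linarith), hδ.2.2 _ (by linarith)]
  exact hzlt.not_firstDiffLT ((listLexLt_angleSeq_iff hT hr hzT).1 (hlead.2 z hzT hzr))

theorem IsTrueLeader.erase_antip (hT : OnCircle T) (ha : antip r ∈ T) (hlead : IsTrueLeader T r) :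
    IsTrueLeader (T.erase (antip r)) r := by
  have hr := hlead.1
  have hrI := hT r hr
  have hr' : r ∈ T.erase (antip r) := mem_erase.2 ⟨(antip_ne_self r).symm, hr⟩
  refine ⟨hr', fun x hx hxr => ?_⟩
  obtain ⟨hxa, hxT⟩ := mem_erase.1 hx
  have hxI := hT x hxT
  obtain ⟨δ, hδ⟩ := (listLexLt_angleSeq_iff hT hr hxT).1 (hlead.2 x hxT hxr)
  rw [listLexLt_angleSeq_iff (hT.erase _) hr' hx, cwDists_erase hT hrI (antip_mem_Ico r),
    cwDists_erase hT hxI (antip_mem_Ico r), cwAngle_antip]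
  refine ⟨_, hδ.erase_erase (cwAngle_mem_cwDists ha hxa.symm) ?_⟩
  have hπ : cwAngle r x ≠ π := fun h => hxa (eq_antip_of_cwAngle_eq_pi hxI h)
  rcases hπ.lt_or_gt with h | h
  · refine min_lt_of_right_lt ?_
    rw [cwAngle_antip_of_le_pi h.le]
    linarith [cwAngle_pos hrI hxI hxr]
  · refine min_lt_of_left_lt ((hlead.lt_cwAngle_of_isFirstDiff hT hxT hδ).trans ?_)
    rw [cwAngle_swap hrI hxI hxr]
    linarith

theorem IsTrueLeader.not_isTrueLeader_of_pi_lt_cwAngle (hT : OnCircle T) (ha : antip r ∈ T)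
    (hlead : IsTrueLeader (T.erase (antip r)) r) {L : ℝ} (hL : L ∈ T) (hLa : L ≠ antip r)
    (hπL : π < cwAngle r L) : ¬IsTrueLeader T L := by
  intro hLlead
  have hr := mem_of_mem_erase hlead.1
  have hrI := hT r hr
  have hLI := hT L hL
  have hLr : L ≠ r := by
    rintro rfl
    simp [cwAngle, norm2pi] at hπL
    linarith [pi_pos]
  have hL' : L ∈ T.erase (antip r) := mem_erase.2 ⟨hLa, hL⟩
  obtain ⟨δ, hδ⟩ := (listLexLt_angleSeq_iff (hT.erase _) hlead.1 hL').1 (hlead.2 L hL' hLr)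
  have hδL := hlead.lt_cwAngle_of_isFirstDiff (hT.erase _) hL' hδ
  rw [cwAngle_swap hrI hLI hLr] at hδL
  rw [cwDists_erase hT hrI (antip_mem_Ico r), cwDists_erase hT hLI (antip_mem_Ico r),
    cwAngle_antip, cwAngle_antip_of_pi_lt hπL,
    isFirstDiff_erase_erase_iff (by linarith) (by linarith)] at hδ
  exact FirstDiffLT.not_firstDiffLT ⟨δ, hδ⟩
    ((listLexLt_angleSeq_iff hT hL hr).1 (hLlead.2 r hr hLr.symm))

end Leader

theorem ConfusedLeader.isTrueLeader_erase_antip {s : Finset ℝ} {r : ℝ} (h : ConfusedLeader s r)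
    (hs : OnCircle s) (ha : antip r ∈ s) :
    IsTrueLeader (s.erase (antip r)) r ∧ ¬IsTrueLeader s r := by
  obtain ⟨-, -, -, hxor⟩ := h
  rw [confC0, confC1, Finset.insert_eq_of_mem ha] at hxor
  exact hxor.resolve_right fun ⟨hlead, hnot⟩ => hnot (hlead.erase_antip hs ha)

theorem confused_leaders_not_antipodal_general
    (s : Finset ℝ) (hcirc : OnCircle s) (hasym : RotAsym s)
    (r₁ r₂ : ℝ) (h₁ : ConfusedLeader s r₁) (h₂ : ConfusedLeader s r₂) :
    antip r₁ ≠ r₂ := by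
  intro hanti
  have hanti' : antip r₂ = r₁ := hanti ▸ antip_antip (hcirc r₁ h₁.1)
  have ha₁ : antip r₁ ∈ s := hanti ▸ h₂.1
  have ha₂ : antip r₂ ∈ s := hanti' ▸ h₁.1
  obtain ⟨hlead₁, hnot₁⟩ := h₁.isTrueLeader_erase_antip hcirc ha₁
  obtain ⟨hlead₂, hnot₂⟩ := h₂.isTrueLeader_erase_antip hcirc ha₂
  obtain ⟨L, hL⟩ := exists_isTrueLeader hcirc hasym ⟨r₁, h₁.1⟩
  have hLr₁ : L ≠ r₁ := by rintro rfl; exact hnot₁ hL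
  have hLr₂ : L ≠ r₂ := by rintro rfl; exact hnot₂ hL
  rcases pi_lt_cwAngle_or_pi_lt_cwAngle_antip (hcirc r₁ h₁.1) (hcirc L hL.1) hLr₁
    (hanti ▸ hLr₂) with h | h
  · exact hlead₁.not_isTrueLeader_of_pi_lt_cwAngle hcirc ha₁ hL.1 (hanti ▸ hLr₂) h hL
  · rw [hanti] at h
    exact hlead₂.not_isTrueLeader_of_pi_lt_cwAngle hcirc ha₂ hL.1 (hanti' ▸ hLr₁) h hL

/-- two distinct confused leaders are not antipodal to each other. -/
theorem confused_leaders_not_antipodal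
    (s : Finset ℝ) (hcirc : OnCircle s) (hasym : RotAsym s)
    (r₁ r₂ : ℝ) (h₁ : ConfusedLeader s r₁) (h₂ : ConfusedLeader s r₂)
    (hne : r₁ ≠ r₂) :
    antip r₁ ≠ r₂ :=
  confused_leaders_not_antipodal_general s hcirc hasym r₁ r₂ h₁ h₂
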